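/- Let 1 ≤ α ≤ 3 and let (D, p, q) be a finite metric voting instance (in general position) such that every pairwise election has distortion at most α, i.e., cost(W(i,j))/cost(opt(i,j)) ≤ α for all pairs of candidates i, j. Then the expected distortion satisfies Social(D, p, q) ≤ (1 + α)/2. -/

import Mathlib

section CappedPairwiseAux
open MeasureTheory Set
open MeasureTheory Set

/-- Chord bound for `exp` on `[0,a]`. -/
theorem exp_chord {a t : ℝ} (ha : 0 < a) (ht0 : 0 ≤ t) (hta : t ≤ a) :
    Real.exp t ≤ 1 + (Real.exp a - 1) * (t / a) := by
  have hθ0 : 0 ≤ t / a := div_nonneg ht0 ha.le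
  have hθ1 : t / a ≤ 1 := (div_le_one ha).2 hta
  have h := convexOn_exp.2 (Set.mem_univ (0:ℝ)) (Set.mem_univ a)
    (by linarith : (0:ℝ) ≤ 1 - t/a) hθ0 (by ring)
  have harg : (1 - t/a) • (0:ℝ) + (t/a) • a = t := by
    field_simp
    rw [smul_eq_mul, smul_eq_mul, mul_zero, zero_add, div_mul_cancel₀ _ ha.ne']
  rw [harg] at h
  have : (1 - t/a) • Real.exp 0 + (t/a) • Real.exp a = 1 + (Real.exp a - 1) * (t/a) := by
    rw [Real.exp_zero]; ring_nf
  linarith [h, this.symm.le]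

/-- The explicit "stripe separation" subset for points `x y` with window `a`. -/
noncomputable def stripeSet (a x y : ℝ) : Set ℝ :=
  if |x - y| ≤ a then
    Set.Ioc (a * Int.fract (min x y / a)) (min (a * Int.fract (min x y / a) + |x - y|) a)
    ∪ Set.Ico 0 (a * Int.fract (min x y / a) + |x - y| - a)
  else ∅

theorem stripeSet_comm (a x y : ℝ) : stripeSet a x y = stripeSet a y x := by
  unfold stripeSet; rw [abs_sub_comm, min_comm]

theorem measurableSet_stripeSet (a x y : ℝ) : MeasurableSet (stripeSet a x y) := by
  unfold stripeSet
  split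
  · exact (measurableSet_Ioc.union measurableSet_Ico)
  · exact MeasurableSet.empty

theorem stripeSet_subset_Icc {a : ℝ} (ha : 0 < a) (x y : ℝ) :
    stripeSet a x y ⊆ Set.Icc 0 a := by
  unfold stripeSet
  split
  · rename_i hle
    have hc0 : 0 ≤ a * Int.fract (min x y / a) :=
      mul_nonneg ha.le (Int.fract_nonneg _)
    have hca : a * Int.fract (min x y / a) < a :=
      lt_of_lt_of_le (mul_lt_mul_of_pos_left (Int.fract_lt_one _) ha) (mul_one a).le
    rintro u (⟨h1, h2⟩ | ⟨h1, h2⟩)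
    · exact ⟨le_trans hc0 h1.le, le_trans h2 (min_le_right _ _)⟩
    · constructor
      · exact h1
      · have := abs_nonneg (x - y)
        nlinarith [h2]
  · exact fun u hu => absurd hu (Set.notMem_empty u)

theorem volume_stripeSet {a : ℝ} (ha : 0 < a) (x y : ℝ) :
    volume (stripeSet a x y) = ENNReal.ofReal (if |x - y| ≤ a then |x - y| else 0) := by
  unfold stripeSet
  split
  · rename_i hle
    set c := a * Int.fract (min x y / a) with hc
    set t := |x - y| with htd
    have ht0 : 0 ≤ t := abs_nonneg _
    have hc0 : 0 ≤ c := mul_nonneg ha.le (Int.fract_nonneg _)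
    have hca : c < a :=
      lt_of_lt_of_le (mul_lt_mul_of_pos_left (Int.fract_lt_one _) ha) (mul_one a).le
    by_cases hcase : c + t ≤ a
    · have h1 : min (c + t) a = c + t := min_eq_left hcase
      have h2 : Set.Ico (0:ℝ) (c + t - a) = ∅ := Set.Ico_eq_empty (by linarith)
      rw [h1, h2, Set.union_empty, Real.volume_Ioc]
      congr 1; ring
    · push_neg at hcase
      have h1 : min (c + t) a = a := min_eq_right (by linarith)
      rw [h1]
      have hdisj : Disjoint (Set.Ioc c a) (Set.Ico (0:ℝ) (c + t - a)) := by
        rw [Set.disjoint_left]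
        rintro u ⟨h2, _⟩ ⟨_, h4⟩
        linarith
      rw [measure_union hdisj measurableSet_Ico, Real.volume_Ioc, Real.volume_Ico,
        ← ENNReal.ofReal_add (by linarith) (by linarith)]
      congr 1; ring
  · simp

theorem stripeSet_floor {a x y u : ℝ} (ha : 0 < a) (hxy : x ≤ y)
    (hu : u ∈ stripeSet a x y) :
    ⌊(y - u) / a⌋ = ⌊(x - u) / a⌋ + 1 := by
  unfold stripeSet at hu
  by_cases hle : |x - y| ≤ a
  swap; · rw [if_neg hle] at hu; exact absurd hu (Set.notMem_empty u)
  rw [if_pos hle] at hu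
  have habs : |x - y| = y - x := by rw [abs_sub_comm]; exact abs_of_nonneg (by linarith)
  have hmin : min x y = x := min_eq_left hxy
  rw [habs, hmin] at hu
  have hta : y - x ≤ a := by rw [habs] at hle; exact hle
  set m := ⌊x / a⌋ with hm
  have hc : a * Int.fract (x / a) = x - a * m := by
    rw [Int.fract, mul_sub, mul_comm a (x / a), div_mul_cancel₀ _ ha.ne']
  rw [hc] at hu
  have hcu0 : 0 ≤ x - a * m := by
    have := Int.fract_nonneg (x / a)
    nlinarith [hc]
  have hca : x - a * m < a := by
    have := Int.fract_lt_one (x / a)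
    nlinarith [hc]
  have hF21 : ⌊(y - u) / a⌋ ≤ ⌊(x - u) / a⌋ + 1 := by
    have h1 : (y - u) / a ≤ (x - u) / a + 1 := by
      rw [← sub_nonneg]
      have heq : (x - u) / a + 1 - (y - u) / a = (x + a - y) / a := by
        field_simp; ring
      rw [heq]
      exact div_nonneg (by linarith) ha.le
    calc ⌊(y - u) / a⌋ ≤ ⌊(x - u) / a + 1⌋ := Int.floor_le_floor h1
      _ = ⌊(x - u) / a⌋ + 1 := Int.floor_add_one _
  rcases hu with ⟨h1, h2⟩ | ⟨h1, h2⟩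
  · have h2' : u ≤ x - a * m + (y - x) := le_trans h2 (min_le_left _ _)
    have hF1 : ⌊(x - u) / a⌋ < m := by
      rw [Int.floor_lt]
      rw [div_lt_iff₀ ha]
      push_cast
      linarith
    have hF2 : m ≤ ⌊(y - u) / a⌋ := by
      rw [Int.le_floor]
      rw [le_div_iff₀ ha]
      push_cast
      linarith
    omega
  · have hF2 : m + 1 ≤ ⌊(y - u) / a⌋ := by
      rw [Int.le_floor, le_div_iff₀ ha]
      push_cast
      linarith
    have hF1 : ⌊(x - u) / a⌋ < m + 1 := by
      rw [Int.floor_lt, div_lt_iff₀ ha]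
      push_cast
      linarith
    omega

theorem avg_key {n : ℕ} (z p : Fin n → ℝ) (hp : ∀ i, 0 ≤ p i) (hpsum : ∑ i, p i = 1)
    {a : ℝ} (ha : 0 < a) :
    ∑ i, ∑ j, p i * p j * (if |z i - z j| ≤ a then |z i - z j| else 0) ≤ a / 2 := by
  classical
  set μ := volume.restrict (Set.Icc (0:ℝ) a) with hμdef
  haveI hfin : IsFiniteMeasure μ := by
    constructor
    rw [hμdef, Measure.restrict_apply_univ, Real.volume_Icc]
    exact ENNReal.ofReal_lt_top
  have hμE : ∀ i j : Fin n, μ (stripeSet a (z i) (z j)) = volume (stripeSet a (z i) (z j)) := by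
    intro i j
    rw [hμdef, Measure.restrict_apply (measurableSet_stripeSet a _ _),
      Set.inter_eq_self_of_subset_left (stripeSet_subset_Icc ha _ _)]
  have hH : ∀ i j : Fin n, (if |z i - z j| ≤ a then |z i - z j| else 0)
      = (μ (stripeSet a (z i) (z j))).toReal := by
    intro i j
    rw [hμE, volume_stripeSet ha, ENNReal.toReal_ofReal]
    split
    · exact abs_nonneg _
    · exact le_refl 0
  have hIntOn : ∀ i j : Fin n,
      Integrable ((stripeSet a (z i) (z j)).indicator (fun _ => (1:ℝ))) μ := by
    intro i j
    rw [integrable_indicator_iff (measurableSet_stripeSet a _ _)]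
    exact integrableOn_const (measure_lt_top μ _).ne
  have hrep : ∀ i j : Fin n, (μ (stripeSet a (z i) (z j))).toReal
      = ∫ u, (stripeSet a (z i) (z j)).indicator (fun _ => (1:ℝ)) u ∂μ := by
    intro i j
    rw [integral_indicator_const (1:ℝ) (measurableSet_stripeSet a _ _), smul_eq_mul, mul_one]
    rfl
  set s : ℝ → Fin n → ℝ := fun u i => if Even ⌊(z i - u) / a⌋ then 1 else -1 with hsdef
  have hs_pm : ∀ u i, s u i = 1 ∨ s u i = -1 := by
    intro u i; rw [hsdef]; dsimp only; split
    · exact Or.inl rfl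
    · exact Or.inr rfl
  have hsep0 : ∀ (u : ℝ) (x y : Fin n), z x ≤ z y → u ∈ stripeSet a (z x) (z y) →
      s u x * s u y = -1 := by
    intro u x y hxy hu
    have hfl := stripeSet_floor ha hxy hu
    rw [hsdef]; dsimp only
    rw [hfl]
    by_cases h : Even ⌊(z x - u) / a⌋
    · rw [if_pos h, if_neg (by rw [Int.even_add_one]; exact not_not_intro h)]; ring
    · rw [if_neg h, if_pos (Int.even_add_one.mpr h)]; ring
  have hsep : ∀ (u : ℝ) (i j : Fin n), u ∈ stripeSet a (z i) (z j) → s u i * s u j = -1 := by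
    intro u i j hu
    rcases le_total (z i) (z j) with hle | hle
    · exact hsep0 u i j hle hu
    · rw [stripeSet_comm] at hu
      rw [mul_comm]
      exact hsep0 u j i hle hu
  have hpt : ∀ u : ℝ,
      ∑ i, ∑ j, p i * p j * (stripeSet a (z i) (z j)).indicator (fun _ => (1:ℝ)) u ≤ 1/2 := by
    intro u
    have step1 : ∑ i, ∑ j, p i * p j * (stripeSet a (z i) (z j)).indicator (fun _ => (1:ℝ)) u
        ≤ ∑ i, ∑ j, p i * p j * ((1 - s u i * s u j)/2) := by
      apply Finset.sum_le_sum; intro i _; apply Finset.sum_le_sum; intro j _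
      by_cases hu : u ∈ stripeSet a (z i) (z j)
      · rw [Set.indicator_of_mem hu, hsep u i j hu]; norm_num
      · rw [Set.indicator_of_notMem hu, mul_zero]
        apply mul_nonneg (mul_nonneg (hp i) (hp j))
        rcases hs_pm u i with h1|h1 <;> rcases hs_pm u j with h2|h2 <;> rw [h1,h2] <;> norm_num
    have expand : (∑ i, ∑ j, p i * p j * ((1 - s u i * s u j)/2))
        = ((∑ i, p i) * (∑ j, p j)) / 2 - ((∑ i, p i * s u i) * (∑ j, p j * s u j)) / 2 := by
      rw [Finset.sum_mul_sum, Finset.sum_mul_sum, Finset.sum_div, Finset.sum_div,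
        ← Finset.sum_sub_distrib]
      apply Finset.sum_congr rfl; intro i _
      rw [Finset.sum_div, Finset.sum_div, ← Finset.sum_sub_distrib]
      apply Finset.sum_congr rfl; intro j _
      ring
    have hsq : (0:ℝ) ≤ (∑ i, p i * s u i) * (∑ j, p j * s u j) := mul_self_nonneg _
    rw [expand, hpsum] at step1
    linarith
  have hInt2 : ∀ i : Fin n, Integrable
      (fun u => ∑ j, p i * p j * (stripeSet a (z i) (z j)).indicator (fun _ => (1:ℝ)) u) μ :=
    fun i => integrable_finset_sum _ (fun j _ => ((hIntOn i j).const_mul _))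
  have main : ∑ i, ∑ j, p i * p j * (μ (stripeSet a (z i) (z j))).toReal
      = ∫ u, (∑ i, ∑ j, p i * p j * (stripeSet a (z i) (z j)).indicator (fun _ => (1:ℝ)) u) ∂μ := by
    rw [integral_finset_sum _ (fun i _ => hInt2 i)]
    apply Finset.sum_congr rfl; intro i _
    rw [integral_finset_sum _ (fun j _ => ((hIntOn i j).const_mul _))]
    apply Finset.sum_congr rfl; intro j _
    rw [integral_const_mul, ← hrep i j]
  have hbound : ∫ u, (∑ i, ∑ j, p i * p j *
        (stripeSet a (z i) (z j)).indicator (fun _ => (1:ℝ)) u) ∂μ ≤ ∫ _u, (1/2 : ℝ) ∂μ :=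
    integral_mono (integrable_finset_sum _ (fun i _ => hInt2 i)) (integrable_const _) hpt
  have hconst : ∫ _u, (1/2:ℝ) ∂μ = a/2 := by
    rw [integral_const, hμdef, Measure.real_def, Measure.restrict_apply_univ, Real.volume_Icc, smul_eq_mul,
      ENNReal.toReal_ofReal (by linarith), sub_zero]
    ring
  calc ∑ i, ∑ j, p i * p j * (if |z i - z j| ≤ a then |z i - z j| else 0)
      = ∑ i, ∑ j, p i * p j * (μ (stripeSet a (z i) (z j))).toReal := by
        apply Finset.sum_congr rfl; intro i _; apply Finset.sum_congr rfl; intro j _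
        rw [hH]
    _ = ∫ u, (∑ i, ∑ j, p i * p j * (stripeSet a (z i) (z j)).indicator (fun _ => (1:ℝ)) u) ∂μ :=
        main
    _ ≤ ∫ _u, (1/2 : ℝ) ∂μ := hbound
    _ = a / 2 := hconst

end CappedPairwiseAux


open Finset

/-- A finite metric space on `n` points. -/
structure FinMetric (n : ℕ) where
  d : Fin n → Fin n → ℝ
  refl : ∀ i, d i i = 0
  symm : ∀ i j, d i j = d j i
  pos : ∀ i j, i ≠ j → 0 < d i j
  triangle : ∀ i j k, d i k ≤ d i j + d j k

/-- Social cost of candidate `i`: average distance to the voters,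
distributed according to `q`. -/
noncomputable def mcost {n : ℕ} (M : FinMetric n) (q : Fin n → ℝ) (i : Fin n) : ℝ :=
  ∑ j, q j * M.d i j

/-- Total voter mass strictly preferring candidate `i` over candidate `i'`. -/
noncomputable def mvotes {n : ℕ} (M : FinMetric n) (q : Fin n → ℝ) (i i' : Fin n) : ℝ :=
  ∑ j ∈ Finset.univ.filter (fun j => M.d i j < M.d i' j), q j

/-- The majority winner of the election between candidates `i` and `i'`. -/
noncomputable def mwin {n : ℕ} (M : FinMetric n) (q : Fin n → ℝ) (i i' : Fin n) : Fin n :=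
  if 1/2 < mvotes M q i i' then i else i'

/-- The socially better of the two candidates `i`, `i'`. -/
noncomputable def mopt {n : ℕ} (M : FinMetric n) (q : Fin n → ℝ) (i i' : Fin n) : Fin n :=
  if mcost M q i < mcost M q i' then i else i'

/-- Pairwise distortion of the election between `i` and `i'`. -/
noncomputable def mr {n : ℕ} (M : FinMetric n) (q : Fin n → ℝ) (i i' : Fin n) : ℝ :=
  mcost M q (mwin M q i i') / mcost M q (mopt M q i i')

/-- Expected distortion: two candidates drawn i.i.d. from `p`, voters distributed as `q`. -/
noncomputable def msocial {n : ℕ} (M : FinMetric n) (p q : Fin n → ℝ) : ℝ :=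
  ∑ i, ∑ i', p i * p i' * mr M q i i'

/-- General position: no voter is equidistant from two distinct candidates, every
election has a strict majority winner, and there are no ties in social cost. -/
def MGenPos {n : ℕ} (M : FinMetric n) (q : Fin n → ℝ) : Prop :=
  (∀ j i i' : Fin n, i ≠ i' → M.d i j ≠ M.d i' j) ∧
  (∀ i i' : Fin n, i ≠ i' → mvotes M q i i' ≠ 1/2) ∧
  (∀ i i' : Fin n, i ≠ i' → mcost M q i ≠ mcost M q i')

/-- if `1 ≤ α ≤ 3` and every pairwise election of the (general
position) instance has distortion at most `α`, then the expected distortion is at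
most `(1 + α)/2`. -/
theorem capped_pairwise_distortion (n : ℕ) (M : FinMetric n) (p q : Fin n → ℝ)
    (α : ℝ) (hα1 : 1 ≤ α) (hα3 : α ≤ 3)
    (hp : ∀ i, 0 ≤ p i) (hpsum : ∑ i, p i = 1)
    (hq : ∀ i, 0 ≤ q i) (hqsum : ∑ i, q i = 1)
    (hgen : MGenPos M q)
    (hcap : ∀ i j : Fin n, mr M q i j ≤ α) :
    msocial M p q ≤ (1 + α) / 2 := by
  have hsum1 : (∑ i : Fin n, ∑ j : Fin n, p i * p j) = 1 := by
    rw [← Finset.sum_mul_sum, hpsum, one_mul]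
  rcases eq_or_lt_of_le hα1 with h1 | h1
  · -- α = 1
    have hb : msocial M p q ≤ ∑ i, ∑ j, p i * p j * α := by
      unfold msocial
      apply Finset.sum_le_sum; intro i _; apply Finset.sum_le_sum; intro j _
      exact mul_le_mul_of_nonneg_left (hcap i j) (mul_nonneg (hp i) (hp j))
    have heq : ∑ i, ∑ j, p i * p j * α = (∑ i : Fin n, ∑ j : Fin n, p i * p j) * α := by
      rw [Finset.sum_mul]
      apply Finset.sum_congr rfl; intro i _
      rw [Finset.sum_mul]
    rw [heq, hsum1, one_mul] at hb
    linarith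
  · -- 1 < α
    have hα0 : (0:ℝ) < α := by linarith
    set a := Real.log α with hadef
    have ha : 0 < a := Real.log_pos h1
    set c := mcost M q with hcdef
    have hd0 : ∀ i j, 0 ≤ M.d i j := by
      intro i j
      have h := M.triangle i j i
      rw [M.refl, M.symm j i] at h
      linarith
    have hc0 : ∀ i, 0 ≤ c i := by
      intro i
      rw [hcdef]
      exact Finset.sum_nonneg (fun j _ => mul_nonneg (hq j) (hd0 i j))
    set z : Fin n → ℝ := fun i => Real.log (c i) with hzdef
    set H : Fin n → Fin n → ℝ := fun i j => if |z i - z j| ≤ a then |z i - z j| else 0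
      with hHdef
    have hHnn : ∀ i j, 0 ≤ H i j := by
      intro i j; rw [hHdef]; dsimp only; split
      · exact abs_nonneg _
      · exact le_refl 0
    have hk : 0 ≤ (α - 1)/a := div_nonneg (by linarith) ha.le
    have key : ∀ i j, mr M q i j ≤ 1 + (α - 1)/a * H i j := by
      intro i j
      set W := mwin M q i j with hWdef
      set O := mopt M q i j with hOdef
      have hWO : mr M q i j = c W / c O := rfl
      have hWmem : W = i ∨ W = j := by
        rw [hWdef]; unfold mwin; split
        · exact Or.inl rfl
        · exact Or.inr rfl
      have hOmem : O = i ∨ O = j := by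
        rw [hOdef]; unfold mopt; split
        · exact Or.inl rfl
        · exact Or.inr rfl
      have hrhs1 : (1:ℝ) ≤ 1 + (α-1)/a * H i j := by
        have := mul_nonneg hk (hHnn i j); linarith
      rcases eq_or_lt_of_le (hc0 O) with hO0 | hO0
      · rw [hWO, ← hO0, div_zero]; linarith
      rcases le_or_gt (c W) (c O) with hWle | hWgt
      · rw [hWO]; exact le_trans ((div_le_one hO0).2 hWle) hrhs1
      · have hcap' : c W / c O ≤ α := by rw [← hWO]; exact hcap i j
        have hWpos : 0 < c W := lt_trans hO0 hWgt
        have hlt : Real.log (c O) < Real.log (c W) := Real.log_lt_log hO0 hWgt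
        have hset : (c W = c i ∧ c O = c j) ∨ (c W = c j ∧ c O = c i) := by
          rcases hWmem with h|h <;> rcases hOmem with h'|h'
          · rw [h, h'] at hWgt; exact absurd hWgt (lt_irrefl _)
          · exact Or.inl ⟨by rw [h], by rw [h']⟩
          · exact Or.inr ⟨by rw [h], by rw [h']⟩
          · rw [h, h'] at hWgt; exact absurd hWgt (lt_irrefl _)
        have habs : |z i - z j| = Real.log (c W) - Real.log (c O) := by
          rcases hset with ⟨hh1, hh2⟩ | ⟨hh1, hh2⟩
          · rw [hzdef]; dsimp only; rw [← hh1, ← hh2, abs_of_nonneg (by linarith)]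
          · rw [hzdef]; dsimp only; rw [← hh1, ← hh2, abs_sub_comm,
              abs_of_nonneg (by linarith)]
        set t := Real.log (c W) - Real.log (c O) with htdef
        have ht0 : 0 ≤ t := by rw [htdef]; linarith
        have hlog : t = Real.log (c W / c O) := (Real.log_div hWpos.ne' hO0.ne').symm
        have hta : t ≤ a := by
          rw [hlog, hadef]
          exact Real.log_le_log (div_pos hWpos hO0) hcap'
        have hexp : Real.exp t = c W / c O := by
          rw [hlog, Real.exp_log (div_pos hWpos hO0)]
        have hchord := exp_chord ha ht0 hta
        rw [Real.exp_log hα0] at hchord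
        have hHval : H i j = t := by
          rw [hHdef]; dsimp only; rw [habs, if_pos hta]
        rw [hWO, ← hexp, hHval]
        calc Real.exp t ≤ 1 + (α - 1) * (t / a) := hchord
          _ = 1 + (α - 1)/a * t := by ring
    have hmain : msocial M p q ≤ ∑ i, ∑ j, p i * p j * (1 + (α-1)/a * H i j) := by
      unfold msocial
      apply Finset.sum_le_sum; intro i _; apply Finset.sum_le_sum; intro j _
      exact mul_le_mul_of_nonneg_left (key i j) (mul_nonneg (hp i) (hp j))
    have hsplit : ∑ i, ∑ j, p i * p j * (1 + (α-1)/a * H i j)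
        = (∑ i : Fin n, ∑ j : Fin n, p i * p j)
          + (α-1)/a * (∑ i, ∑ j, p i * p j * H i j) := by
      rw [Finset.mul_sum, ← Finset.sum_add_distrib]
      apply Finset.sum_congr rfl; intro i _
      rw [Finset.mul_sum, ← Finset.sum_add_distrib]
      apply Finset.sum_congr rfl; intro j _
      ring
    have havg : ∑ i, ∑ j, p i * p j * H i j ≤ a / 2 := by
      rw [hHdef]
      exact avg_key z p hp hpsum ha
    have hfin : (α-1)/a * (∑ i, ∑ j, p i * p j * H i j) ≤ (α-1)/a * (a/2) :=
      mul_le_mul_of_nonneg_left havg hk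
    have hval : (α-1)/a * (a/2) = (α-1)/2 := by
      field_simp
    rw [hsplit, hsum1] at hmain
    linarith
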